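/- arXiv:1401.0409 — 2 statements merged into one kernel-verified Lean document; each statement's English description precedes it below -/
import Mathlib

section
/- Assume min{α, βα} > d and d ≥ 2. Then the critical value λ_c(α) is finite, i.e. there exists λ ∈ (0,∞) with θ(λ,α) > 0. -/
/-!
Almost surely every weight is at least `1`, and nearest neighbours are at distance `1`, so a
nearest-neighbour edge is occupied as soon as its uniform variable is at most `1 - e^{-λ}`.
Restricted to a coordinate plane, the cluster of the origin therefore contains the cluster of
Bernoulli bond percolation on `ℤ²` with parameter `1 - e^{-λ}`, which is infinite with positive
probability when `e^{-λ} = 1/32` by the Peierls argument. If that cluster is finite, its edge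
boundary contains a closed self-avoiding dual path that starts at the edge just right of the
rightmost point `(K, 0)` of the cluster and crosses the negative horizontal axis, so that its
length `n` exceeds `K`. There are at most `n 8^n` such paths, and each one is closed with
probability `32^{-(n+1)}`.
-/

open MeasureTheory ProbabilityTheory Real Set

namespace InhomLRP

/-- Vertices of the lattice `ℤ^d`. -/
abbrev V (d : ℕ) := Fin d → ℤ

/-- Euclidean distance between two vertices of `ℤ^d`. -/
noncomputable def edist {d : ℕ} (x y : V d) : ℝ :=
  Real.sqrt (∑ i, ((x i : ℝ) - (y i : ℝ)) ^ 2)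

/-- The inhomogeneous long-range percolation model on `ℤ^d` with weight tail parameter `β`.
It is realized by i.i.d. Pareto(1,β) weights `W x` and, independently of everything else,
i.i.d. uniform-[0,1] variables `U e` attached to the (unordered) edges; for parameters
`lam > 0` and `α > 0` the edge `(x,y)` is occupied iff
`U ⟦(x,y)⟧ ≤ 1 - exp(-lam * W x * W y / |x-y|^α)`, which produces exactly the
conditionally independent edge percolation with the prescribed probabilities. -/
structure Model (d : ℕ) (β : ℝ) where
  Ω : Type
  mΩ : MeasurableSpace Ω
  μ : Measure Ω
  hprob : IsProbabilityMeasure μ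
  W : V d → Ω → ℝ
  U : Sym2 (V d) → Ω → ℝ
  hW_meas : ∀ x, Measurable (W x)
  hU_meas : ∀ e, Measurable (U e)
  /-- all the weights and all the edge uniforms are jointly independent -/
  hindep : iIndepFun (Sum.elim W U) μ
  /-- each weight is Pareto(θ=1, β) distributed: `P[W_x ≤ w] = 1 - w^{-β}` for `w ≥ 1`,
  and `0` otherwise; in particular `P[W_x > w] = w^{-β}` for `w ≥ 1`. -/
  hPareto : ∀ x w, μ {ω | W x ω ≤ w} =
      if 1 ≤ w then ENNReal.ofReal (1 - w ^ (-β)) else 0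
  /-- each edge variable is uniformly distributed on `[0,1]` -/
  hUnif : ∀ e, ∀ u ∈ Set.Icc (0 : ℝ) 1, μ {ω | U e ω ≤ u} = ENNReal.ofReal u

attribute [instance] Model.mΩ

variable {d : ℕ} {β : ℝ}

/-- The edge `(x,y)` is occupied in configuration `ω`, at parameters `(lam, α)`. -/
def occ (M : Model d β) (lam α : ℝ) (x y : V d) (ω : M.Ω) : Prop :=
  x ≠ y ∧ M.U s(x, y) ω ≤ 1 - Real.exp (-(lam * M.W x ω * M.W y ω) / edist x y ^ α)

/-- `x ↔ y` : the vertices `x` and `y` are joined by a finite path of occupied edges. -/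
def connected (M : Model d β) (lam α : ℝ) (ω : M.Ω) (x y : V d) : Prop :=
  Relation.ReflTransGen (fun a b => occ M lam α a b ω) x y

/-- The cluster `C(x)` of the vertex `x`. -/
def cluster (M : Model d β) (lam α : ℝ) (ω : M.Ω) (x : V d) : Set (V d) :=
  {y | connected M lam α ω x y}

/-- The percolation probability `θ(lam, α) = P[|C(0)| = ∞]`. -/
noncomputable def theta (M : Model d β) (lam α : ℝ) : ℝ :=
  (M.μ {ω | (cluster M lam α ω 0).Infinite}).toReal

/-- The critical value `λ_c(α) = inf {lam > 0 : θ(lam,α) > 0}`. -/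
noncomputable def lambdac (M : Model d β) (α : ℝ) : ℝ :=
  sInf {lam : ℝ | 0 < lam ∧ 0 < theta M lam α}

open scoped ENNReal Finset

namespace Peierls

open scoped Classical

/-- `(z, false)` is the edge of `ℤ²` from `z` to `z + (1, 0)`, and `(z, true)` the edge from `z`
to `z + (0, 1)`. -/
abbrev Edge : Type := (ℤ × ℤ) × Bool

def Edge.src (e : Edge) : ℤ × ℤ := e.1

def Edge.tgt (e : Edge) : ℤ × ℤ := if e.2 then (e.1.1, e.1.2 + 1) else (e.1.1 + 1, e.1.2)

/-- The bottom, top, left and right sides of the unit square with lower-left corner `f`. -/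
def side (f : ℤ × ℤ) : Fin 4 → Edge
  | 0 => (f, false)
  | 1 => ((f.1, f.2 + 1), false)
  | 2 => (f, true)
  | 3 => ((f.1 + 1, f.2), true)

/-- The lower-left corners of the two unit squares having `e` as a side. -/
def Edge.face (e : Edge) : Fin 2 → ℤ × ℤ
  | 0 => e.1
  | 1 => if e.2 then (e.1.1 - 1, e.1.2) else (e.1.1, e.1.2 - 1)

def Edge.step (e : Edge) (i : Fin 2 × Fin 4) : Edge := side (e.face i.1) i.2

lemma exists_side_face (e : Edge) (j : Fin 2) : ∃ k, side (e.face j) k = e := by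
  obtain ⟨⟨a, b⟩, t⟩ := e
  fin_cases j <;> cases t
  exacts [⟨0, rfl⟩, ⟨2, rfl⟩, ⟨1, by simp [side, Edge.face]⟩, ⟨3, by simp [side, Edge.face]⟩]

lemma exists_face_side (f : ℤ × ℤ) (k : Fin 4) : ∃ j, (side f k).face j = f := by
  fin_cases k
  exacts [⟨0, rfl⟩, ⟨1, by simp [side, Edge.face]⟩, ⟨0, rfl⟩, ⟨1, by simp [side, Edge.face]⟩]

lemma exists_step_eq_of_step_eq {e e' : Edge} {i : Fin 2 × Fin 4} (h : e.step i = e') :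
    ∃ i', e'.step i' = e := by
  obtain ⟨j, hj⟩ := exists_face_side (e.face i.1) i.2
  obtain ⟨k, hk⟩ := exists_side_face e i.1
  exact ⟨(j, k), by rw [← h, Edge.step, Edge.step, hj, hk]⟩

lemma fst_le_fst_step_add_one (e : Edge) (i : Fin 2 × Fin 4) : e.1.1 ≤ (e.step i).1.1 + 1 := by
  obtain ⟨⟨a, b⟩, t⟩ := e
  obtain ⟨j, k⟩ := i
  fin_cases j <;> fin_cases k <;> cases t <;> simp [Edge.step, side, Edge.face] <;> omega

/-- The graph of the dual edges crossing `Γ`; two of them share an endpoint when the edges they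
cross bound a common unit square. -/
def dualGraph (Γ : Set Edge) : SimpleGraph Edge where
  Adj e e' := e ≠ e' ∧ e ∈ Γ ∧ e' ∈ Γ ∧ ∃ i, e.step i = e'
  symm := ⟨fun _ _ ⟨hne, he, he', _, hi⟩ => ⟨hne.symm, he', he, exists_step_eq_of_step_eq hi⟩⟩
  loopless := ⟨fun _ h => h.1 rfl⟩

def dualWalk (e : Edge) : List (Fin 2 × Fin 4) → List Edge
  | [] => [e]
  | i :: s => e :: dualWalk (e.step i) s

lemma length_dualWalk (e : Edge) (s : List (Fin 2 × Fin 4)) :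
    (dualWalk e s).length = s.length + 1 := by
  induction s generalizing e with
  | nil => rfl
  | cons i s ih => simp [dualWalk, ih]

section Walks

variable {Γ : Set Edge} {e e' : Edge}

lemma exists_dualWalk_eq_support (p : (dualGraph Γ).Walk e e') :
    ∃ s, dualWalk e s = p.support := by
  induction p with
  | nil => exact ⟨[], rfl⟩
  | cons h _ ih =>
    obtain ⟨i, hi⟩ := h.2.2.2
    obtain ⟨s, hs⟩ := ih
    exact ⟨i :: s, by rw [dualWalk, hi, hs, SimpleGraph.Walk.support_cons]⟩

lemma mem_of_mem_support (p : (dualGraph Γ).Walk e e') (he : e ∈ Γ) :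
    ∀ x ∈ p.support, x ∈ Γ := by
  induction p with
  | nil => simpa using he
  | cons h _ ih => simpa [he] using ih h.2.2.1

lemma fst_le_fst_add_length (p : (dualGraph Γ).Walk e e') : e.1.1 ≤ e'.1.1 + p.length := by
  induction p with
  | nil => simp
  | @cons u _ _ h _ ih =>
    obtain ⟨i, rfl⟩ := h.2.2.2
    have := fst_le_fst_step_add_one u i
    push_cast [SimpleGraph.Walk.length_cons]
    omega

end Walks

noncomputable def faceDeg (G : Finset Edge) (f : ℤ × ℤ) : ℕ :=
  ∑ k, if side f k ∈ G then 1 else 0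

lemma faceDeg_eq (G : Finset Edge) (x y : ℤ) :
    faceDeg G (x, y) = (if ((x, y), false) ∈ G then 1 else 0) +
      (if ((x, y + 1), false) ∈ G then 1 else 0) + (if ((x, y), true) ∈ G then 1 else 0) +
      (if ((x + 1, y), true) ∈ G then 1 else 0) := by
  simp only [faceDeg, Fin.sum_univ_four, side]
  rfl

def edgeBoundary (A : Set (ℤ × ℤ)) : Set Edge := {e | Xor (e.src ∈ A) (e.tgt ∈ A)}

lemma edgeBoundary_finite {A : Set (ℤ × ℤ)} (hA : A.Finite) : (edgeBoundary A).Finite := by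
  have hsrc : {e : Edge | e.src ∈ A}.Finite :=
    (hA.prod Set.finite_univ).subset fun _ he => ⟨he, trivial⟩
  have htgt : {e : Edge | e.tgt ∈ A}.Finite := by
    refine ((hA.prod (Set.finite_univ (α := Bool))).preimage (f := fun e : Edge => (e.tgt, e.2))
      ?_).subset fun _ he => ⟨he, trivial⟩
    rintro ⟨⟨a, b⟩, s⟩ - ⟨⟨a', b'⟩, t⟩ - h
    cases s <;> cases t <;> simp_all [Edge.tgt]
  exact (hsrc.union htgt).subset fun e he => by rcases he with ⟨h, -⟩ | ⟨h, -⟩ <;> simp_all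

/-- Each corner of a unit square is an endpoint of exactly two of its sides. -/
lemma even_faceDeg_of_coe_eq_edgeBoundary {G : Finset Edge} {A : Set (ℤ × ℤ)}
    (hG : (G : Set Edge) = edgeBoundary A) (f : ℤ × ℤ) : Even (faceDeg G f) := by
  obtain ⟨x, y⟩ := f
  simp only [faceDeg_eq, ← Finset.mem_coe, hG, edgeBoundary, Set.mem_ofPred_eq, Edge.src, Edge.tgt,
    if_true, if_false, Bool.false_eq_true]
  by_cases h₁ : (x, y) ∈ A <;> by_cases h₂ : (x + 1, y) ∈ A <;> by_cases h₃ : (x, y + 1) ∈ A <;>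
    by_cases h₄ : (x + 1, y + 1) ∈ A <;> simp [h₁, h₂, h₃, h₄, Xor] <;> decide

noncomputable def dualComponent (G : Finset Edge) (e₀ : Edge) : Finset Edge :=
  G.filter ((dualGraph G).Reachable e₀)

lemma dualComponent_subset (G : Finset Edge) (e₀ : Edge) : dualComponent G e₀ ⊆ G :=
  Finset.filter_subset _ _

lemma even_faceDeg_dualComponent {G : Finset Edge} (hG : ∀ f, Even (faceDeg G f)) (e₀ : Edge)
    (f : ℤ × ℤ) : Even (faceDeg (dualComponent G e₀) f) := by
  by_cases h : ∃ k, side f k ∈ dualComponent G e₀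
  · obtain ⟨k, hk⟩ := h
    obtain ⟨hkG, hreach⟩ := Finset.mem_filter.mp hk
    have hmem (k' : Fin 4) : side f k' ∈ dualComponent G e₀ ↔ side f k' ∈ G := by
      refine ⟨fun h' => dualComponent_subset G e₀ h', fun h' => Finset.mem_filter.mpr ⟨h', ?_⟩⟩
      by_cases hkk' : side f k = side f k'
      · rwa [← hkk']
      obtain ⟨j, hj⟩ := exists_face_side f k
      exact hreach.trans (SimpleGraph.Adj.reachable ⟨hkk', hkG, h', (j, k'), by rw [Edge.step, hj]⟩)
    simpa only [faceDeg, hmem] using hG f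
  · push Not at h
    simp [faceDeg, h]

lemma exists_forall_abs_lt (G : Finset Edge) : ∃ B : ℤ, ∀ e ∈ G, |e.1.1| < B ∧ |e.1.2| < B := by
  obtain ⟨B, hB⟩ := (G.image fun e => |e.1.1| + |e.1.2|).exists_le
  refine ⟨B + 1, fun e he => ?_⟩
  have := hB _ (Finset.mem_image_of_mem _ he)
  constructor <;> linarith [abs_nonneg e.1.1, abs_nonneg e.1.2]

/-- The number of dual edges of `G` crossing the half-line issued from `z` to the right. -/
noncomputable def ray (G : Finset Edge) (z : ℤ × ℤ) : ℕ :=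
  #(G.filter fun e => e.2 = false ∧ e.1.2 = z.2 ∧ z.1 ≤ e.1.1)

lemma ray_eq_ite_add_ray (G : Finset Edge) (x y : ℤ) :
    ray G (x, y) = (if ((x, y), false) ∈ G then 1 else 0) + ray G (x + 1, y) := by
  rw [ray, ray, Finset.card_filter, Finset.card_filter,
    ← Finset.sum_ite_eq' G ((x, y), false) fun _ => 1, ← Finset.sum_add_distrib]
  refine Finset.sum_congr rfl fun e _ => ?_
  obtain ⟨⟨a, b⟩, t⟩ := e
  cases t
  · simp only [Prod.mk.injEq, and_true, true_and]
    split_ifs <;> omega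
  · simp

lemma ray_eq_ray_of_forall {G : Finset Edge} {x' x y : ℤ} (hx : x' ≤ x)
    (h : ∀ e ∈ G, e.2 = false → e.1.2 = y → x' ≤ e.1.1 → x ≤ e.1.1) :
    ray G (x', y) = ray G (x, y) := by
  unfold ray
  congr 1
  exact Finset.filter_congr fun e he =>
    ⟨fun ⟨h1, h2, h3⟩ => ⟨h1, h2, h e he h1 h2 h3⟩, fun ⟨h1, h2, h3⟩ => ⟨h1, h2, hx.trans h3⟩⟩

/-- By induction from the right of `G`: moving `x` one step to the left adds the even degree of the
square `(x - 1, y)`. -/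
lemma even_ray_add_ray_add_ite {G : Finset Edge} (hG : ∀ f, Even (faceDeg G f)) (x y : ℤ) :
    Even (ray G (x, y) + ray G (x, y + 1) + if ((x, y), true) ∈ G then 1 else 0) := by
  obtain ⟨B, hB⟩ := exists_forall_abs_lt G
  have hright : ∀ x, B ≤ x → ∀ y, ray G (x, y) = 0 ∧ ((x, y), true) ∉ G := fun x hx y =>
    ⟨Finset.card_eq_zero.mpr <| Finset.filter_eq_empty_iff.mpr fun e he h =>
      by linarith [(abs_lt.mp (hB e he).1).2, h.2.2],
     fun he => by linarith [(abs_lt.mp (hB _ he).1).2]⟩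
  rcases le_total B x with hx | hx
  · simp [(hright x hx y).1, (hright x hx (y + 1)).1, (hright x hx y).2]
  induction x, hx using Int.leInductionDown with
  | base => simp [(hright B le_rfl y).1, (hright B le_rfl (y + 1)).1, (hright B le_rfl y).2]
  | pred x _ ih =>
    have h₁ := ray_eq_ite_add_ray G (x - 1) y
    have h₂ := ray_eq_ite_add_ray G (x - 1) (y + 1)
    have h₃ := hG (x - 1, y)
    rw [faceDeg_eq] at h₃
    rw [sub_add_cancel] at h₁ h₂ h₃
    rw [Nat.even_iff] at ih h₃ ⊢
    omega

lemma even_ray_src_add_ray_tgt {G : Finset Edge} (hG : ∀ f, Even (faceDeg G f)) (e : Edge) :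
    Even (ray G e.src + ray G e.tgt + if e ∈ G then 1 else 0) := by
  obtain ⟨⟨x, y⟩, t⟩ := e
  cases t
  · simp only [Edge.src, Edge.tgt, ray_eq_ite_add_ray G x y, Bool.false_eq_true, if_false]
    rw [Nat.even_iff]
    omega
  · exact even_ray_add_ray_add_ite hG x y

lemma even_ray_of_forall_lt {G : Finset Edge} (hG : ∀ f, Even (faceDeg G f)) {x : ℤ}
    (hx : ∀ e ∈ G, x < e.1.1) (y : ℤ) : Even (ray G (x, y)) := by
  obtain ⟨B, hB⟩ := exists_forall_abs_lt G
  have hstep : ∀ n : ℕ, Even (ray G (x, y) + ray G (x, y + n)) := by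
    intro n
    induction n with
    | zero => simp
    | succ n ih =>
      have h := even_ray_add_ray_add_ite hG x (y + n)
      rw [if_neg fun he => (hx _ he).false] at h
      push_cast
      rw [← add_assoc]
      rw [Nat.even_iff] at ih h ⊢
      omega
  have htop : ray G (x, y + (B - y).toNat) = 0 :=
    Finset.card_eq_zero.mpr <| Finset.filter_eq_empty_iff.mpr fun e he h => by
      have := (abs_lt.mp (hB e he).2).2
      omega
  have h := hstep (B - y).toNat
  rwa [htop, add_zero] at h

def openCluster (O : Set Edge) : Set (ℤ × ℤ) :=
  {z | Relation.ReflTransGen (fun a b => ∃ e ∈ O, s(e.src, e.tgt) = s(a, b)) 0 z}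

lemma notMem_of_mem_edgeBoundary_openCluster {O : Set Edge} {e : Edge}
    (he : e ∈ edgeBoundary (openCluster O)) : e ∉ O := fun heO => by
  rcases he with ⟨hs, ht⟩ | ⟨ht, hs⟩
  · exact ht (Relation.ReflTransGen.tail hs ⟨e, heO, rfl⟩)
  · exact hs (Relation.ReflTransGen.tail ht ⟨e, heO, Sym2.eq_swap⟩)

lemma even_ray_add_ray_of_mem_openCluster {G : Finset Edge} {O : Set Edge}
    (hG : ∀ f, Even (faceDeg G f)) (hGO : ∀ e ∈ G, e ∉ O) {z : ℤ × ℤ} (hz : z ∈ openCluster O) :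
    Even (ray G 0 + ray G z) := by
  induction hz with
  | refl => exact ⟨_, rfl⟩
  | tail _ hab ih =>
    obtain ⟨e, heO, he⟩ := hab
    have h := even_ray_src_add_ray_tgt hG e
    rw [if_neg fun heG => hGO e heG heO, add_zero] at h
    rw [Nat.even_iff] at ih h ⊢
    rcases Sym2.eq_iff.mp he with ⟨rfl, rfl⟩ | ⟨rfl, rfl⟩ <;> omega

section Crossing

variable {O : Set Edge} {K : ℕ}

lemma exists_rightmost_mem {A : Set (ℤ × ℤ)} (hA : A.Finite) (h0 : (0, 0) ∈ A) :
    ∃ K : ℕ, ((K : ℤ), (0 : ℤ)) ∈ A ∧ ∀ m : ℤ, (m, 0) ∈ A → m ≤ K := by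
  have hrow : ((fun m : ℤ => (m, (0 : ℤ))) ⁻¹' A).Finite :=
    hA.preimage fun _ _ _ _ h => (Prod.mk.inj h).1
  obtain ⟨K, hK, hmax⟩ := Set.exists_max_image _ id hrow ⟨0, h0⟩
  lift K to ℕ using hmax 0 h0
  exact ⟨K, hK, hmax⟩

lemma mem_edgeBoundary_of_rightmost (hK : ((K : ℤ), (0 : ℤ)) ∈ openCluster O)
    (hmax : ∀ m : ℤ, (m, 0) ∈ openCluster O → m ≤ K) :
    (((K : ℤ), (0 : ℤ)), false) ∈ edgeBoundary (openCluster O) :=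
  Or.inl ⟨hK, fun h => by simpa using hmax _ h⟩

/-- The number of dual edges of the component crossing the half-line from `z` to the right is
odd at `z = (K, 0)`, hence at `z = 0` since the cluster is connected and avoids the component,
whereas it is even far to the left. -/
lemma exists_mem_dualComponent_fst_neg {Γ : Finset Edge}
    (hΓ : (Γ : Set Edge) = edgeBoundary (openCluster O)) (hK : ((K : ℤ), (0 : ℤ)) ∈ openCluster O)
    (hmax : ∀ m : ℤ, (m, 0) ∈ openCluster O → m ≤ K) :
    ∃ e ∈ dualComponent Γ (((K : ℤ), 0), false), e.1.1 < 0 := by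
  set G := dualComponent Γ (((K : ℤ), 0), false)
  have he₀ : (((K : ℤ), (0 : ℤ)), false) ∈ G := Finset.mem_filter.mpr
    ⟨by rw [← Finset.mem_coe, hΓ]; exact mem_edgeBoundary_of_rightmost hK hmax,
      SimpleGraph.Reachable.refl _⟩
  have hG : ∀ f, Even (faceDeg G f) :=
    even_faceDeg_dualComponent (even_faceDeg_of_coe_eq_edgeBoundary hΓ) _
  have hGΓ : ∀ e ∈ G, e ∈ edgeBoundary (openCluster O) := fun e he => by
    rw [← hΓ]; exact dualComponent_subset _ _ he
  have hright : ray G ((K : ℤ) + 1, 0) = 0 :=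
    Finset.card_eq_zero.mpr <| Finset.filter_eq_empty_iff.mpr fun e he ⟨ht, hy, hx⟩ => by
      obtain ⟨⟨a, b⟩, t⟩ := e
      simp only at ht hy hx
      subst ht hy
      rcases hGΓ _ he with ⟨h, -⟩ | ⟨h, -⟩
      · linarith [hmax a h]
      · linarith [hmax (a + 1) h]
  have hodd : ¬ Even (ray G 0) := by
    have h := even_ray_add_ray_of_mem_openCluster hG
      (fun e he => notMem_of_mem_edgeBoundary_openCluster (hGΓ e he)) hK
    rw [ray_eq_ite_add_ray G K 0, if_pos he₀, hright] at h
    rw [Nat.even_iff] at h ⊢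
    omega
  obtain ⟨B, hB⟩ := exists_forall_abs_lt G
  by_contra! hnonneg
  refine hodd ((ray_eq_ray_of_forall (x' := -B) ?_ fun e he _ _ _ => hnonneg e he) ▸
    even_ray_of_forall_lt hG (fun e he => (abs_lt.mp (hB e he).1).1) 0)
  linarith [(hB _ he₀).1, abs_nonneg ((K : ℤ))]

end Crossing

theorem exists_closed_dualWalk {O : Set Edge} (hfin : (openCluster O).Finite) :
    ∃ (K : ℕ) (s : List (Fin 2 × Fin 4)), K < s.length ∧
      (dualWalk (((K : ℤ), 0), false) s).Nodup ∧ ∀ e ∈ dualWalk (((K : ℤ), 0), false) s, e ∉ O := by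
  obtain ⟨K, hK, hmax⟩ := exists_rightmost_mem hfin .refl
  set Γ := (edgeBoundary_finite hfin).toFinset
  have hΓ : (Γ : Set Edge) = edgeBoundary (openCluster O) := Set.Finite.coe_toFinset _
  obtain ⟨e, he, hneg⟩ := exists_mem_dualComponent_fst_neg hΓ hK hmax
  obtain ⟨p⟩ := (Finset.mem_filter.mp he).2
  obtain ⟨s, hs⟩ := exists_dualWalk_eq_support p.bypass
  refine ⟨K, s, ?_, hs ▸ p.bypass_isPath.support_nodup, fun x hx => ?_⟩
  · have hlen := congrArg List.length hs
    rw [length_dualWalk, SimpleGraph.Walk.length_support] at hlen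
    have hspan := fst_le_fst_add_length p.bypass
    dsimp only at hspan
    omega
  · refine notMem_of_mem_edgeBoundary_openCluster ?_
    rw [← hΓ]
    refine mem_of_mem_support p.bypass ?_ x (hs ▸ hx)
    rw [hΓ]
    exact mem_edgeBoundary_of_rightmost hK hmax

section Bound

variable {Ω : Type*} [MeasurableSpace Ω] (μ : Measure Ω) {O : Ω → Set Edge} {q : ℝ≥0∞}

lemma measure_closed_dualWalk_le (hq : ∀ T : Finset Edge, μ {ω | ∀ e ∈ T, e ∉ O ω} ≤ q ^ #T)
    (e₀ : Edge) (s : List (Fin 2 × Fin 4)) :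
    μ {ω | (dualWalk e₀ s).Nodup ∧ ∀ e ∈ dualWalk e₀ s, e ∉ O ω} ≤ q ^ (s.length + 1) := by
  by_cases hnd : (dualWalk e₀ s).Nodup
  · calc _ ≤ μ {ω | ∀ e ∈ (dualWalk e₀ s).toFinset, e ∉ O ω} :=
          measure_mono fun ω hω e he => hω.2 e (List.mem_toFinset.mp he)
      _ ≤ _ := hq _
      _ = _ := by rw [List.toFinset_card_of_nodup hnd, length_dualWalk]
  · simp [hnd]

lemma natCast_mul_eight_pow_mul_pow_le (q : ℝ≥0∞) (n : ℕ) :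
    (n * 8 ^ n : ℝ≥0∞) * q ^ (n + 1) ≤ (16 * q) ^ n * q := by
  have hn : (n : ℝ≥0∞) ≤ 2 ^ n := by exact_mod_cast n.lt_two_pow_self.le
  calc (n * 8 ^ n : ℝ≥0∞) * q ^ (n + 1) ≤ (2 ^ n * 8 ^ n) * q ^ (n + 1) := by gcongr
    _ = (2 * 8 * q) ^ n * q := by rw [mul_pow, mul_pow, pow_succ]; ring
    _ = (16 * q) ^ n * q := by norm_num

/-- There are at most `n * 8 ^ n` dual walks of length `n` starting on the horizontal axis at a
distance less than `n` to the right of the origin. -/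
theorem measure_openCluster_finite_le
    (hq : ∀ T : Finset Edge, μ {ω | ∀ e ∈ T, e ∉ O ω} ≤ q ^ #T) :
    μ {ω | (openCluster (O ω)).Finite} ≤ ∑' n : ℕ, (16 * q) ^ n * q := by
  let E (i : Σ n : ℕ, Fin n × (Fin n → Fin 2 × Fin 4)) : Set Ω :=
    {ω | (dualWalk ((((i.2.1 : ℕ) : ℤ), 0), false) (List.ofFn i.2.2)).Nodup ∧
      ∀ e ∈ dualWalk ((((i.2.1 : ℕ) : ℤ), 0), false) (List.ofFn i.2.2), e ∉ O ω}
  have hcover : {ω | (openCluster (O ω)).Finite} ⊆ ⋃ i, E i := fun ω hω => by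
    obtain ⟨K, s, hKs, hclosed⟩ := exists_closed_dualWalk hω
    exact Set.mem_iUnion.mpr ⟨⟨s.length, ⟨K, hKs⟩, s.get⟩, by simpa [E] using hclosed⟩
  calc μ _ ≤ ∑' i, μ (E i) := (measure_mono hcover).trans (measure_iUnion_le _)
    _ ≤ ∑' i : Σ n : ℕ, Fin n × (Fin n → Fin 2 × Fin 4), q ^ (i.1 + 1) :=
      ENNReal.tsum_le_tsum fun i =>
        (measure_closed_dualWalk_le μ hq _ _).trans_eq (by rw [List.length_ofFn])
    _ = ∑' n : ℕ, (n * 8 ^ n : ℝ≥0∞) * q ^ (n + 1) := by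
      rw [ENNReal.tsum_sigma']
      congr 1 with n
      simp [tsum_fintype]
    _ ≤ _ := ENNReal.tsum_le_tsum (natCast_mul_eight_pow_mul_pow_le q)

end Bound

end Peierls

open Peierls

section ModelPlane

variable (M : Model d β)

def emb (d : ℕ) (z : ℤ × ℤ) : V d :=
  fun i => if (i : ℕ) = 0 then z.1 else if (i : ℕ) = 1 then z.2 else 0

lemma emb_injective (hd : 2 ≤ d) : Function.Injective (emb d) := fun z w h => by
  have h₀ := congrFun h ⟨0, by omega⟩
  have h₁ := congrFun h ⟨1, by omega⟩
  simp only [emb] at h₀ h₁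
  exact Prod.ext (by simpa using h₀) (by simpa using h₁)

lemma edist_emb_src_tgt (hd : 2 ≤ d) (e : Edge) : edist (emb d e.src) (emb d e.tgt) = 1 := by
  let j : Fin d := ⟨if e.2 then 1 else 0, by split <;> omega⟩
  have hsq (i : Fin d) : ((emb d e.src i : ℝ) - emb d e.tgt i) ^ 2 = if i = j then 1 else 0 := by
    obtain ⟨⟨a, b⟩, t⟩ := e
    cases t <;> by_cases h₀ : (i : ℕ) = 0 <;> by_cases h₁ : (i : ℕ) = 1 <;>
      simp [emb, Edge.src, Edge.tgt, j, Fin.ext_iff, h₀, h₁]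
  rw [edist, Finset.sum_congr rfl fun i _ => hsq i, Finset.sum_ite_eq', if_pos (Finset.mem_univ _),
    sqrt_one]

def embEdge (d : ℕ) (e : Edge) : Sym2 (V d) := s(emb d e.src, emb d e.tgt)

lemma embEdge_injective (hd : 2 ≤ d) : Function.Injective (embEdge d) := fun e e' h => by
  obtain ⟨⟨a, b⟩, t⟩ := e
  obtain ⟨⟨a', b'⟩, t'⟩ := e'
  rcases Sym2.eq_iff.mp h with ⟨h₁, h₂⟩ | ⟨h₁, h₂⟩ <;>
  · have h₁' := emb_injective hd h₁
    have h₂' := emb_injective hd h₂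
    cases t <;> cases t' <;> simp [Edge.src, Edge.tgt, Prod.ext_iff] at h₁' h₂' ⊢ <;> omega

lemma edist_comm (x y : V d) : edist x y = edist y x := by
  simp only [edist]
  congr 1
  exact Finset.sum_congr rfl fun i _ => by ring

lemma occ_symm {lam α : ℝ} {x y : V d} {ω : M.Ω} (h : occ M lam α x y ω) :
    occ M lam α y x ω :=
  ⟨h.1.symm, by rw [Sym2.eq_swap, edist_comm, mul_right_comm]; exact h.2⟩

def planeOpen (p : ℝ) (ω : M.Ω) : Set Edge := {e | M.U (embEdge d e) ω ≤ p}

lemma occ_emb_src_tgt (hd : 2 ≤ d) {lam : ℝ} (hlam : 0 ≤ lam) (α : ℝ) {ω : M.Ω}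
    (hW : ∀ x, 1 ≤ M.W x ω) {e : Edge} (he : e ∈ planeOpen M (1 - exp (-lam)) ω) :
    occ M lam α (emb d e.src) (emb d e.tgt) ω := by
  refine ⟨fun h => ?_, ?_⟩
  · obtain ⟨⟨a, b⟩, t⟩ := e
    cases t <;> simpa [Edge.src, Edge.tgt] using emb_injective hd h
  · rw [edist_emb_src_tgt hd, one_rpow, div_one]
    have hWW : lam ≤ lam * M.W (emb d e.src) ω * M.W (emb d e.tgt) ω := by
      rw [mul_assoc]
      exact le_mul_of_one_le_right hlam (one_le_mul_of_one_le_of_one_le (hW _) (hW _))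
    exact he.trans (by gcongr)

lemma emb_mem_cluster (hd : 2 ≤ d) {lam : ℝ} (hlam : 0 ≤ lam) (α : ℝ) {ω : M.Ω}
    (hW : ∀ x, 1 ≤ M.W x ω) {z : ℤ × ℤ} (hz : z ∈ openCluster (planeOpen M (1 - exp (-lam)) ω)) :
    emb d z ∈ cluster M lam α ω 0 := by
  induction hz with
  | refl =>
    have h0 : emb d 0 = 0 := by ext i; simp [emb]
    rw [h0]
    exact Relation.ReflTransGen.refl
  | tail _ hab ih =>
    obtain ⟨e, he, hsym⟩ := hab
    have hocc := occ_emb_src_tgt M hd hlam α hW he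
    rcases Sym2.eq_iff.mp hsym with ⟨rfl, rfl⟩ | ⟨rfl, rfl⟩
    · exact ih.tail hocc
    · exact ih.tail (occ_symm M hocc)

lemma cluster_infinite (hd : 2 ≤ d) {lam : ℝ} (hlam : 0 ≤ lam) (α : ℝ) {ω : M.Ω}
    (hW : ∀ x, 1 ≤ M.W x ω) (h : (openCluster (planeOpen M (1 - exp (-lam)) ω)).Infinite) :
    (cluster M lam α ω 0).Infinite :=
  (h.image (emb_injective hd).injOn).mono <| Set.image_subset_iff.mpr fun _ hz =>
    emb_mem_cluster M hd hlam α hW hz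

lemma ae_one_le_weight : ∀ᵐ ω ∂M.μ, ∀ x, 1 ≤ M.W x ω := by
  refine ae_all_iff.mpr fun x => ?_
  have hgt (n : ℕ) : ∀ᵐ ω ∂M.μ, 1 - 1 / ((n : ℝ) + 1) < M.W x ω := by
    simp only [ae_iff, not_lt]
    rw [M.hPareto, if_neg]
    have : 0 < 1 / ((n : ℝ) + 1) := by positivity
    linarith
  filter_upwards [ae_all_iff.mpr hgt] with ω hω
  by_contra! hlt
  obtain ⟨n, hn⟩ := exists_nat_one_div_lt (sub_pos.mpr hlt)
  linarith [hω n]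

lemma measure_U_preimage_Ioi {p : ℝ} (hp₀ : 0 ≤ p) (hp₁ : p ≤ 1) (e : Sym2 (V d)) :
    M.μ (M.U e ⁻¹' Set.Ioi p) = ENNReal.ofReal (1 - p) := by
  have := M.hprob
  have hcompl : M.U e ⁻¹' Set.Ioi p = {ω | M.U e ω ≤ p}ᶜ := by ext; simp
  rw [hcompl, prob_compl_eq_one_sub (measurableSet_le (M.hU_meas e) measurable_const),
    M.hUnif e p ⟨hp₀, hp₁⟩, ENNReal.ofReal_sub _ hp₀, ENNReal.ofReal_one]

lemma measure_forall_notMem_planeOpen (hd : 2 ≤ d) {p : ℝ} (hp₀ : 0 ≤ p) (hp₁ : p ≤ 1)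
    (T : Finset Edge) :
    M.μ {ω | ∀ e ∈ T, e ∉ planeOpen M p ω} = ENNReal.ofReal (1 - p) ^ #T := by
  let s (i : V d ⊕ Sym2 (V d)) : Set M.Ω := Sum.elim M.W M.U i ⁻¹' Set.Ioi p
  have hset : {ω | ∀ e ∈ T, e ∉ planeOpen M p ω} =
      ⋂ i ∈ T.image fun e => Sum.inr (embEdge d e), s i := by
    ext ω
    simp only [s, planeOpen, Set.mem_ofPred_eq, Set.mem_iInter, Finset.mem_image, Set.mem_preimage,
      Set.mem_Ioi, not_le, forall_exists_index, and_imp, forall_apply_eq_imp_iff₂, Sum.elim_inr]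
  rw [hset, M.hindep.meas_biInter fun i _ => ⟨_, measurableSet_Ioi, rfl⟩,
    Finset.prod_image fun _ _ _ _ h => embEdge_injective hd (Sum.inr_injective h)]
  simp only [Sum.elim_inr]
  rw [Finset.prod_congr rfl fun e _ => measure_U_preimage_Ioi M hp₀ hp₁ (embEdge d e),
    Finset.prod_const]

lemma measure_planeOpen_finite_lt_one (hd : 2 ≤ d) :
    M.μ {ω | (openCluster (planeOpen M (1 - exp (-log 32)) ω)).Finite} < 1 := by
  have hexp : exp (-log 32) = 32⁻¹ := by rw [exp_neg, exp_log (by norm_num)]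
  have hclosed (T : Finset Edge) :
      M.μ {ω | ∀ e ∈ T, e ∉ planeOpen M (1 - exp (-log 32)) ω} ≤ 32⁻¹ ^ #T := by
    rw [measure_forall_notMem_planeOpen M hd (by rw [hexp]; norm_num) (by rw [hexp]; norm_num),
      sub_sub_cancel, hexp, ENNReal.ofReal_inv_of_pos (by norm_num), ENNReal.ofReal_ofNat]
  have h16 : (16 : ℝ≥0∞) * 32⁻¹ = 2⁻¹ := by
    rw [show (32 : ℝ≥0∞) = 2 * 16 by norm_num, ENNReal.mul_inv (by simp) (by simp),
      mul_left_comm, ENNReal.mul_inv_cancel (by simp) (by simp), mul_one]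
  calc _ ≤ ∑' n : ℕ, (16 * (32 : ℝ≥0∞)⁻¹) ^ n * 32⁻¹ := measure_openCluster_finite_le M.μ hclosed
    _ = 2 * 32⁻¹ := by
      rw [ENNReal.tsum_mul_right, h16, ENNReal.tsum_geometric, ENNReal.one_sub_inv_two, inv_inv]
    _ < 1 := by
      rw [← div_eq_mul_inv, ENNReal.div_lt_iff (by simp) (by simp), one_mul]
      norm_num

end ModelPlane

theorem statement_0_general (d : ℕ) (β α : ℝ) (hd : 2 ≤ d) (M : Model d β) :
    ∃ lam : ℝ, 0 < lam ∧ 0 < theta M lam α := by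
  have := M.hprob
  have hlam : 0 < log 32 := log_pos (by norm_num)
  set S := {ω | (cluster M (log 32) α ω 0).Infinite}
  have hcompl : Sᶜ ⊆ {ω | (openCluster (planeOpen M (1 - exp (-log 32)) ω)).Finite} ∪
      {ω | ¬ ∀ x, 1 ≤ M.W x ω} := fun ω hω => by
    by_contra h
    simp only [Set.mem_union, Set.mem_ofPred_eq, not_or, not_not] at h
    exact hω (cluster_infinite M hd hlam.le α h.2 h.1)
  have hSc : M.μ Sᶜ < 1 := (measure_mono hcompl).trans_lt <| (measure_union_le _ _).trans_lt <| by
    rw [ae_iff.mp (ae_one_le_weight M), add_zero]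
    exact measure_planeOpen_finite_lt_one M hd
  refine ⟨log 32, hlam, ENNReal.toReal_pos (fun hS => ?_) (measure_ne_top _ _)⟩
  have hsplit := measure_univ_le_add_compl (μ := M.μ) S
  rw [hS, measure_univ, zero_add] at hsplit
  exact hsplit.not_gt hSc

/-- Theorem 3.1(a): if `min {α, βα} > d` and `d ≥ 2`, then
`λ_c(α) < ∞`, i.e. there exists `λ ∈ (0,∞)` with `θ(λ,α) > 0`. -/
theorem statement_0 (d : ℕ) (β α : ℝ) (hd : 2 ≤ d) (hβ : 0 < β)
    (hα : (d : ℝ) < min α (β * α)) (M : Model d β) :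
    ∃ lam : ℝ, 0 < lam ∧ 0 < theta M lam α :=
  statement_0_general d β α hd M

end InhomLRP
end

section
/- Assume min{α, βα} > d. Then for every δ ∈ (0, α(β∧1) − d) there exist t_0 ≥ 1 and a constant c_1 > 0 such that for all real t ≥ t_0 and all real s ≥ 1, P[there exist x, y ∈ ([0,s−1]^d ∩ ℤ^d) with |x−y| > t such that the edge (x,y) is occupied] ≤ c_1 s^d t^{d − α(β∧1) + δ}. -/
/-!
Occupation of `(x, y)` forces `U ≤ 1 - exp(-c) ≤ c` with `c = λ W_x W_y |x - y|^{-α}`, so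
`1 ≤ (c / U)^γ`. By Markov's inequality and independence, for every `0 < γ < β ∧ 1`,
`P[(x, y) occupied] ≤ λ^γ E[W^γ]^2 E[U^{-γ}] |x - y|^{-αγ}`, and the Pareto and uniform tails
make these moments finite. Choose `αγ = α(β ∧ 1) - δ/2`: on `|z| > t` one has
`|z|^{-αγ} ≤ t^{d - α(β ∧ 1) + δ} |z|^{-(d + δ/2)}`, and `∑_{z ∈ ℤ^d} |z|^{-(d + δ/2)}` converges.
A union bound over the at most `s^d` lattice points of the box finishes the proof.
-/

open MeasureTheory ProbabilityTheory Real Set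

open scoped ENNReal

section PowerTail

variable {Ω : Type*} [MeasurableSpace Ω] {μ : Measure Ω} [IsProbabilityMeasure μ]

theorem lintegral_ofReal_le_of_meas_lt_le_rpow {f : Ω → ℝ} (hf : AEMeasurable f μ)
    (hf₀ : 0 ≤ᵐ[μ] f) {p : ℝ} (hp : 1 < p)
    (htail : ∀ t : ℝ, 1 < t → μ {ω | t < f ω} ≤ ENNReal.ofReal (t ^ (-p))) :
    ∫⁻ ω, ENNReal.ofReal (f ω) ∂μ ≤ ENNReal.ofReal (p / (p - 1)) := by
  have hp₁ : 0 < p - 1 := by linarith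
  have hint : ∫⁻ t in Ioi (1 : ℝ), ENNReal.ofReal (t ^ (-p)) = ENNReal.ofReal (1 / (p - 1)) := by
    rw [← ofReal_integral_eq_lintegral_ofReal (integrableOn_Ioi_rpow_of_lt (by linarith) one_pos)
      ((ae_restrict_mem measurableSet_Ioi).mono fun t ht =>
        rpow_nonneg (zero_le_one.trans ht.le) _),
      integral_Ioi_rpow_of_lt (by linarith) one_pos, one_rpow, neg_div, ← div_neg, neg_add,
      neg_neg, ← sub_eq_add_neg]
  have hsmall : ∫⁻ t in Ioc (0 : ℝ) 1, μ {ω | t < f ω} ≤ 1 :=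
    calc ∫⁻ t in Ioc (0 : ℝ) 1, μ {ω | t < f ω} ≤ ∫⁻ _ in Ioc (0 : ℝ) 1, 1 :=
          lintegral_mono fun _ => prob_le_one
      _ = 1 := by simp
  rw [lintegral_eq_lintegral_meas_lt μ hf₀ hf, ← Ioc_union_Ioi_eq_Ioi zero_le_one,
    lintegral_union measurableSet_Ioi (Ioc_disjoint_Ioi le_rfl)]
  calc _ ≤ 1 + ∫⁻ t in Ioi (1 : ℝ), ENNReal.ofReal (t ^ (-p)) :=
        add_le_add hsmall (setLIntegral_mono (by fun_prop) htail)
    _ = ENNReal.ofReal (p / (p - 1)) := by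
        rw [hint, ← ENNReal.ofReal_one, ← ENNReal.ofReal_add zero_le_one (by positivity)]
        congr 1
        field_simp
        ring

theorem lintegral_max_one_rpow_le {Y : Ω → ℝ} (hY : Measurable Y) {β γ : ℝ} (hγ : 0 < γ)
    (hγβ : γ < β) (htail : ∀ w : ℝ, 1 ≤ w → μ {ω | w < Y ω} ≤ ENNReal.ofReal (w ^ (-β))) :
    ∫⁻ ω, ENNReal.ofReal (max (Y ω) 1 ^ γ) ∂μ ≤ ENNReal.ofReal (β / (β - γ)) := by
  have hp : β / γ / (β / γ - 1) = β / (β - γ) := by field_simp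
  rw [← hp]
  refine lintegral_ofReal_le_of_meas_lt_le_rpow (by fun_prop)
    (ae_of_all _ fun ω => by positivity) ((one_lt_div hγ).mpr hγβ) fun t ht => ?_
  have ht₀ : 0 < t := by linarith
  have hw : 1 ≤ t ^ γ⁻¹ := one_le_rpow ht.le (by positivity)
  calc μ {ω | t < max (Y ω) 1 ^ γ} ≤ μ {ω | t ^ γ⁻¹ < Y ω} := by
        refine measure_mono fun ω hω => ?_
        have hlt : t ^ γ⁻¹ < max (Y ω) 1 := by
          rwa [rpow_inv_lt_iff_of_pos ht₀.le (by positivity) hγ]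
        exact (lt_max_iff.mp hlt).resolve_right hw.not_gt
    _ ≤ ENNReal.ofReal ((t ^ γ⁻¹) ^ (-β)) := htail _ hw
    _ = ENNReal.ofReal (t ^ (-(β / γ))) := by
        rw [← rpow_mul ht₀.le]
        ring_nf

theorem lintegral_max_zero_rpow_neg_le {U : Ω → ℝ} (hU : Measurable U) {γ : ℝ} (hγ : 0 < γ)
    (hγ₁ : γ < 1) (hcdf : ∀ u ∈ Icc (0 : ℝ) 1, μ {ω | U ω ≤ u} ≤ ENNReal.ofReal u) :
    ∫⁻ ω, ENNReal.ofReal (max (U ω) 0 ^ (-γ)) ∂μ ≤ ENNReal.ofReal (1 / (1 - γ)) := by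
  have hp : 1 / γ / (1 / γ - 1) = 1 / (1 - γ) := by field_simp
  rw [← hp]
  refine lintegral_ofReal_le_of_meas_lt_le_rpow (by fun_prop)
    (ae_of_all _ fun ω => by positivity) ((one_lt_div hγ).mpr hγ₁) fun t ht => ?_
  have ht₀ : 0 < t := by linarith
  calc μ {ω | t < max (U ω) 0 ^ (-γ)} ≤ μ {ω | U ω ≤ t ^ (-(1 / γ))} := by
        refine measure_mono fun ω (hω : t < max (U ω) 0 ^ (-γ)) => ?_
        have hpos : 0 < max (U ω) 0 := by
          by_contra h
          rw [le_antisymm (not_lt.mp h) (le_max_right _ _), zero_rpow (by linarith)] at hω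
          linarith
        have hlt : max (U ω) 0 < t ^ (-γ)⁻¹ := by
          rwa [lt_rpow_inv_iff_of_neg hpos ht₀ (by linarith)]
        change U ω ≤ t ^ (-(1 / γ))
        rw [show -(1 / γ) = (-γ)⁻¹ by field_simp]
        exact (le_max_left _ _).trans hlt.le
    _ ≤ ENNReal.ofReal (t ^ (-(1 / γ))) :=
        hcdf _ ⟨by positivity,
          rpow_le_one_of_one_le_of_nonpos ht.le (neg_nonpos.mpr (by positivity))⟩

end PowerTail

theorem one_le_rpow_mul_rpow_neg_of_le_one_sub_exp {u c γ : ℝ} (hu : 0 < u) (hγ : 0 ≤ γ)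
    (h : u ≤ 1 - exp (-c)) : 1 ≤ c ^ γ * u ^ (-γ) := by
  have huc : u ≤ c := h.trans (by linarith [add_one_le_exp (-c)])
  rw [rpow_neg hu.le, ← div_eq_mul_inv, ← div_rpow (hu.trans_le huc).le hu.le]
  exact one_le_rpow ((one_le_div hu).mpr huc) hγ

namespace InhomLRP

variable {d : ℕ} {β : ℝ}

def toEuclidean (z : V d) : EuclideanSpace ℝ (Fin d) := WithLp.toLp 2 fun i => (z i : ℝ)

theorem edist_eq_norm_toEuclidean_sub (x y : V d) : edist x y = ‖toEuclidean (x - y)‖ := by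
  simp [edist, toEuclidean, EuclideanSpace.norm_eq]

theorem toEuclidean_mem_span (z : V d) :
    toEuclidean z ∈ Submodule.span ℤ (Set.range (PiLp.basisFun 2 ℝ (Fin d))) := by
  have : toEuclidean z = ∑ i, z i • PiLp.basisFun 2 ℝ (Fin d) i := by
    ext j; simp [toEuclidean, Pi.single_apply]
  rw [this]
  exact Submodule.sum_mem _ fun i _ => Submodule.smul_mem _ _ (Submodule.subset_span ⟨i, rfl⟩)

theorem toEuclidean_injective : Function.Injective (toEuclidean (d := d)) :=
  fun _ _ h => funext fun i => by simpa [toEuclidean] using congrArg (· i) h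

theorem summable_norm_toEuclidean_rpow {q : ℝ} (hq : (d : ℝ) < q) :
    Summable fun z : V d => ‖toEuclidean z‖ ^ (-q) := by
  let L : Submodule ℤ (EuclideanSpace ℝ (Fin d)) :=
    Submodule.span ℤ (Set.range (PiLp.basisFun 2 ℝ (Fin d)))
  have hrank : Module.finrank ℤ L = d := by rw [ZLattice.rank ℝ, finrank_euclideanSpace_fin]
  have hL : Summable fun z : L => ‖z‖ ^ (-q) :=
    ZLattice.summable_norm_rpow L (-q) (by rw [hrank]; linarith)
  have hsum := hL.comp_injective (i := fun z => ⟨toEuclidean z, toEuclidean_mem_span z⟩)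
    fun x y h => toEuclidean_injective (congrArg Subtype.val h)
  exact hsum

theorem edist_pos_of_ne {x y : V d} (h : x ≠ y) : 0 < edist x y := by
  rw [edist_eq_norm_toEuclidean_sub, norm_pos_iff]
  intro h0
  refine h (funext fun i => ?_)
  simpa [toEuclidean, sub_eq_zero] using congrArg (· i) h0

theorem tsum_ite_lt_edist_rpow_le {q q' t : ℝ} (hq' : (d : ℝ) < q') (hqq' : q' ≤ q) (ht : 0 < t)
    (x : V d) :
    ∑' y, (if t < edist x y then ENNReal.ofReal (edist x y ^ (-q)) else 0) ≤
      ENNReal.ofReal ((∑' z : V d, ‖toEuclidean z‖ ^ (-q')) * t ^ (q' - q)) := by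
  have hsum := (summable_norm_toEuclidean_rpow hq').mul_right (t ^ (q' - q))
  have hterm : ∀ y, (if t < edist x y then ENNReal.ofReal (edist x y ^ (-q)) else 0) ≤
      ENNReal.ofReal (‖toEuclidean (x - y)‖ ^ (-q') * t ^ (q' - q)) := by
    intro y
    split_ifs with hty
    · rw [← edist_eq_norm_toEuclidean_sub]
      have hr : 0 < edist x y := ht.trans hty
      refine ENNReal.ofReal_le_ofReal ?_
      calc edist x y ^ (-q) = edist x y ^ (-q') * edist x y ^ (q' - q) := by
            rw [← rpow_add hr]; ring_nf
        _ ≤ edist x y ^ (-q') * t ^ (q' - q) :=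
            mul_le_mul_of_nonneg_left (rpow_le_rpow_of_nonpos ht hty.le (by linarith))
              (by positivity)
    · exact zero_le
  calc _ ≤ ∑' y, ENNReal.ofReal (‖toEuclidean (x - y)‖ ^ (-q') * t ^ (q' - q)) :=
        ENNReal.tsum_le_tsum hterm
    _ = ∑' z, ENNReal.ofReal (‖toEuclidean z‖ ^ (-q') * t ^ (q' - q)) :=
        (Equiv.subLeft x).tsum_eq fun z => ENNReal.ofReal (‖toEuclidean z‖ ^ (-q') * t ^ (q' - q))
    _ = _ := by
        rw [← ENNReal.ofReal_tsum_of_nonneg (fun z => by positivity) hsum, tsum_mul_right]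

noncomputable def box (s : ℝ) : Finset (V d) := Fintype.piFinset fun _ => Finset.Icc 0 ⌊s - 1⌋

theorem mem_box {s : ℝ} {x : V d} (hx : ∀ i, (0 : ℝ) ≤ (x i : ℝ) ∧ (x i : ℝ) ≤ s - 1) :
    x ∈ box s :=
  Fintype.mem_piFinset.mpr fun i =>
    Finset.mem_Icc.mpr ⟨by exact_mod_cast (hx i).1, Int.le_floor.mpr (hx i).2⟩

theorem card_box_le {s : ℝ} (hs : 1 ≤ s) : ((box (d := d) s).card : ℝ) ≤ s ^ d := by
  have hcard : (Finset.Icc 0 ⌊s - 1⌋).card = ⌊s⌋₊ := by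
    rw [Int.card_Icc, Int.floor_sub_one, sub_add_cancel, sub_zero, Int.floor_toNat]
  rw [box, Fintype.card_piFinset, Finset.prod_const, Finset.card_univ, Fintype.card_fin, hcard]
  push_cast
  exact pow_le_pow_left₀ (Nat.cast_nonneg _) (Nat.floor_le (by linarith)) d

namespace Model

variable (M : Model d β)

theorem one_le_W_ae (x : V d) : ∀ᵐ ω ∂M.μ, 1 ≤ M.W x ω := by
  have hlt : {ω | ¬ 1 ≤ M.W x ω} ⊆ ⋃ n : ℕ, {ω | M.W x ω ≤ 1 - 1 / (n + 1)} := by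
    intro ω (hω : ¬ 1 ≤ M.W x ω)
    obtain ⟨n, hn⟩ := exists_nat_one_div_lt (sub_pos.mpr (not_le.mp hω))
    exact mem_iUnion.mpr ⟨n, show M.W x ω ≤ 1 - 1 / (n + 1) by linarith⟩
  refine measure_mono_null hlt (measure_iUnion_null fun n => ?_)
  rw [M.hPareto, if_neg]
  linarith [show (0 : ℝ) < 1 / (n + 1) by positivity]

theorem meas_lt_W_le (x : V d) {w : ℝ} (hw : 1 ≤ w) :
    M.μ {ω | w < M.W x ω} ≤ ENNReal.ofReal (w ^ (-β)) := by
  have := M.hprob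
  have hcompl : {ω | w < M.W x ω} = {ω | M.W x ω ≤ w}ᶜ := by ext; simp
  rw [hcompl, prob_compl_eq_one_sub (measurableSet_le (M.hW_meas x) measurable_const),
    M.hPareto, if_pos hw, tsub_le_iff_right]
  calc (1 : ℝ≥0∞) = ENNReal.ofReal (w ^ (-β) + (1 - w ^ (-β))) := by simp
    _ ≤ _ := ENNReal.ofReal_add_le

theorem lintegral_comp_W_mul_comp_W_mul_comp_U {x y : V d} (hxy : x ≠ y) {f g h : ℝ → ℝ≥0∞}
    (hf : Measurable f) (hg : Measurable g) (hh : Measurable h) :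
    ∫⁻ ω, f (M.W x ω) * g (M.W y ω) * h (M.U s(x, y) ω) ∂M.μ =
      (∫⁻ ω, f (M.W x ω) ∂M.μ) * (∫⁻ ω, g (M.W y ω) ∂M.μ) * ∫⁻ ω, h (M.U s(x, y) ω) ∂M.μ := by
  have hmeas : ∀ i, Measurable (Sum.elim M.W M.U i) := by
    rintro (v | e)
    exacts [M.hW_meas v, M.hU_meas e]
  have hfg : IndepFun (fun ω => f (M.W x ω)) (fun ω => g (M.W y ω)) M.μ :=
    (M.hindep.indepFun (i := Sum.inl x) (j := Sum.inl y) (by simpa using hxy)).comp hf hg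
  have hWWU : IndepFun (fun ω => (M.W x ω, M.W y ω)) (M.U s(x, y)) M.μ :=
    M.hindep.indepFun_prodMk hmeas (Sum.inl x) (Sum.inl y) (Sum.inr s(x, y)) (by simp) (by simp)
  have hfgh : IndepFun (fun ω => f (M.W x ω) * g (M.W y ω)) (fun ω => h (M.U s(x, y) ω)) M.μ :=
    hWWU.comp (φ := fun p : ℝ × ℝ => f p.1 * g p.2) (by fun_prop) hh
  have := M.hW_meas
  have := M.hU_meas
  rw [lintegral_mul_eq_lintegral_mul_lintegral_of_indepFun'' (by fun_prop) (by fun_prop) hfgh,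
    lintegral_mul_eq_lintegral_mul_lintegral_of_indepFun'' (by fun_prop) (by fun_prop) hfg]

theorem U_pos_ae (e : Sym2 (V d)) : ∀ᵐ ω ∂M.μ, 0 < M.U e ω := by
  have hnonpos : M.μ {ω | M.U e ω ≤ 0} = 0 := by
    rw [M.hUnif e 0 ⟨le_rfl, zero_le_one⟩, ENNReal.ofReal_zero]
  exact measure_mono_null (fun ω (hω : ¬ 0 < M.U e ω) => not_lt.mp hω) hnonpos

theorem measure_occ_le {lam α γ : ℝ} (hlam : 0 < lam) (hγ : 0 < γ) (hγβ : γ < β) (hγ₁ : γ < 1)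
    {x y : V d} (hxy : x ≠ y) :
    M.μ {ω | occ M lam α x y ω} ≤
      ENNReal.ofReal (lam ^ γ * (β / (β - γ)) ^ 2 / (1 - γ) * edist x y ^ (-(α * γ))) := by
  have := M.hprob
  have hr : 0 < edist x y := edist_pos_of_ne hxy
  set K := lam ^ γ * edist x y ^ (-(α * γ)) with hK
  have hK₀ : 0 ≤ K := by positivity
  let X : M.Ω → ℝ≥0∞ := fun ω => ENNReal.ofReal K * (ENNReal.ofReal (max (M.W x ω) 1 ^ γ) *
    ENNReal.ofReal (max (M.W y ω) 1 ^ γ) * ENNReal.ofReal (max (M.U s(x, y) ω) 0 ^ (-γ)))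
  have hX : Measurable X := by
    have := M.hW_meas; have := M.hU_meas
    fun_prop
  have hocc : ∀ᵐ ω ∂M.μ, occ M lam α x y ω → 1 ≤ X ω := by
    filter_upwards [M.one_le_W_ae x, M.one_le_W_ae y, M.U_pos_ae s(x, y)] with ω hWx hWy hU hocc
    have h1 := one_le_rpow_mul_rpow_neg_of_le_one_sub_exp hU hγ.le
      (c := lam * M.W x ω * M.W y ω / edist x y ^ α) (by rw [← neg_div]; exact hocc.2)
    have hc : (lam * M.W x ω * M.W y ω / edist x y ^ α) ^ γ =
        K * (M.W x ω ^ γ * M.W y ω ^ γ) := by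
      rw [div_rpow (by positivity) (by positivity), mul_rpow (by positivity) (by positivity),
        mul_rpow hlam.le (by positivity), ← rpow_mul hr.le, hK, rpow_neg hr.le]
      ring
    simp only [X, max_eq_left hWx, max_eq_left hWy, max_eq_left hU.le]
    rw [← ENNReal.ofReal_mul (by positivity), ← ENNReal.ofReal_mul (by positivity),
      ← ENNReal.ofReal_mul (by positivity)]
    exact ENNReal.one_le_ofReal.mpr (by rw [hc] at h1; linarith)
  have hmoment : ∫⁻ ω, X ω ∂M.μ ≤ ENNReal.ofReal K * (ENNReal.ofReal (β / (β - γ)) *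
      ENNReal.ofReal (β / (β - γ)) * ENNReal.ofReal (1 / (1 - γ))) := by
    simp only [X]
    rw [lintegral_const_mul _ (by have := M.hW_meas; have := M.hU_meas; fun_prop),
      M.lintegral_comp_W_mul_comp_W_mul_comp_U hxy (f := fun w => ENNReal.ofReal (max w 1 ^ γ))
      (g := fun w => ENNReal.ofReal (max w 1 ^ γ)) (h := fun u => ENNReal.ofReal (max u 0 ^ (-γ)))
      (by fun_prop) (by fun_prop) (by fun_prop)]
    gcongr
    · exact lintegral_max_one_rpow_le (M.hW_meas x) hγ hγβ fun w hw => M.meas_lt_W_le x hw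
    · exact lintegral_max_one_rpow_le (M.hW_meas y) hγ hγβ fun w hw => M.meas_lt_W_le y hw
    · exact lintegral_max_zero_rpow_neg_le (M.hU_meas _) hγ hγ₁ fun u hu => (M.hUnif _ u hu).le
  calc M.μ {ω | occ M lam α x y ω} ≤ M.μ {ω | 1 ≤ X ω} := measure_mono_ae hocc
    _ ≤ ∫⁻ ω, X ω ∂M.μ := by simpa using mul_meas_ge_le_lintegral₀ hX.aemeasurable 1
    _ ≤ _ := hmoment
    _ = _ := by
        have hβγ : 0 ≤ β / (β - γ) := div_nonneg (by linarith) (by linarith)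
        rw [← ENNReal.ofReal_mul hβγ, ← ENNReal.ofReal_mul (mul_nonneg hβγ hβγ),
          ← ENNReal.ofReal_mul hK₀]
        congr 1
        ring

theorem measure_exists_far_occ_le (lam α s t : ℝ) :
    M.μ {ω | ∃ x y : V d,
        (∀ i, (0 : ℝ) ≤ (x i : ℝ) ∧ (x i : ℝ) ≤ s - 1) ∧
        (∀ i, (0 : ℝ) ≤ (y i : ℝ) ∧ (y i : ℝ) ≤ s - 1) ∧
        t < edist x y ∧ occ M lam α x y ω} ≤
      ∑ x ∈ box s, ∑' y, M.μ {ω | t < edist x y ∧ occ M lam α x y ω} :=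
  calc _ ≤ M.μ (⋃ x ∈ box s, ⋃ y, {ω | t < edist x y ∧ occ M lam α x y ω}) := by
        refine measure_mono fun ω ⟨x, y, hx, _, hfar⟩ => ?_
        exact mem_iUnion₂.mpr ⟨x, mem_box hx, mem_iUnion.mpr ⟨y, hfar⟩⟩
    _ ≤ ∑ x ∈ box s, M.μ (⋃ y, {ω | t < edist x y ∧ occ M lam α x y ω}) :=
        measure_biUnion_finset_le _ _
    _ ≤ _ := Finset.sum_le_sum fun x _ => measure_iUnion_le _

theorem tsum_measure_far_occ_le {lam α γ q t : ℝ} (hlam : 0 < lam) (hγ : 0 < γ) (hγβ : γ < β)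
    (hγ₁ : γ < 1) (hq : (d : ℝ) < q) (hqγ : q ≤ α * γ) (ht : 0 < t) (x : V d) :
    ∑' y, M.μ {ω | t < edist x y ∧ occ M lam α x y ω} ≤
      ENNReal.ofReal (lam ^ γ * (β / (β - γ)) ^ 2 / (1 - γ) *
        (∑' z : V d, ‖toEuclidean z‖ ^ (-q)) * t ^ (q - α * γ)) := by
  set C := lam ^ γ * (β / (β - γ)) ^ 2 / (1 - γ)
  have hC : 0 ≤ C := div_nonneg (by positivity) (by linarith)
  have hterm : ∀ y, M.μ {ω | t < edist x y ∧ occ M lam α x y ω} ≤ ENNReal.ofReal C *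
      (if t < edist x y then ENNReal.ofReal (edist x y ^ (-(α * γ))) else 0) := by
    intro y
    split_ifs with hfar
    · have hxy : x ≠ y := by
        rintro rfl
        simp [edist] at hfar
        linarith
      rw [← ENNReal.ofReal_mul hC]
      exact (measure_mono fun ω hω => hω.2).trans (M.measure_occ_le hlam hγ hγβ hγ₁ hxy)
    · simp [hfar]
  calc _ ≤ ∑' y, ENNReal.ofReal C *
        (if t < edist x y then ENNReal.ofReal (edist x y ^ (-(α * γ))) else 0) :=
        ENNReal.tsum_le_tsum hterm
    _ ≤ ENNReal.ofReal C *
        ENNReal.ofReal ((∑' z : V d, ‖toEuclidean z‖ ^ (-q)) * t ^ (q - α * γ)) := by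
        rw [ENNReal.tsum_mul_left]
        gcongr
        exact tsum_ite_lt_edist_rpow_le hq hqγ ht x
    _ = _ := by rw [← ENNReal.ofReal_mul hC, mul_assoc]

end Model

theorem statement_18_general (d : ℕ) (β α : ℝ)
    (hα : (d : ℝ) < min α (β * α)) (M : Model d β) (lam : ℝ) (hlam : 0 < lam) :
    ∀ δ : ℝ, 0 < δ → δ < α * min β 1 - d →
      ∃ t₀ : ℝ, 1 ≤ t₀ ∧ ∃ c₁ : ℝ, 0 < c₁ ∧ ∀ t : ℝ, t₀ ≤ t → ∀ s : ℝ, 1 ≤ s →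
        M.μ {ω | ∃ x y : V d,
            (∀ i, (0 : ℝ) ≤ (x i : ℝ) ∧ (x i : ℝ) ≤ s - 1) ∧
            (∀ i, (0 : ℝ) ≤ (y i : ℝ) ∧ (y i : ℝ) ≤ s - 1) ∧
            t < edist x y ∧ occ M lam α x y ω} ≤
          ENNReal.ofReal (c₁ * s ^ (d : ℕ) * t ^ ((d : ℝ) - α * min β 1 + δ)) := by
  intro δ hδ hδm
  have hα₀ : 0 < α := (Nat.cast_nonneg d).trans_lt (hα.trans_le (min_le_left _ _))
  set m := min β 1
  set γ := m - δ / (2 * α) with hγdef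
  set q := (d : ℝ) + δ / 2 with hqdef
  have hγm : γ < m := sub_lt_self _ (by positivity)
  have hγ : 0 < γ := by
    rw [sub_pos, div_lt_iff₀ (by positivity)]
    nlinarith [Nat.cast_nonneg (α := ℝ) d]
  have hαγ : α * γ = α * m - δ / 2 := by rw [hγdef]; field_simp
  have hqγ : q ≤ α * γ := by linarith
  set C := lam ^ γ * (β / (β - γ)) ^ 2 / (1 - γ) * ∑' z : V d, ‖toEuclidean z‖ ^ (-q)
  have hC : 0 ≤ C := mul_nonneg
    (div_nonneg (by positivity) (by linarith [min_le_right β 1]))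
    (tsum_nonneg fun z => by positivity)
  refine ⟨1, le_rfl, C + 1, by positivity, fun t ht s hs => ?_⟩
  have hexp : q - α * γ = (d : ℝ) - α * m + δ := by linarith
  calc _ ≤ ∑ x ∈ box s, ∑' y, M.μ {ω | t < edist x y ∧ occ M lam α x y ω} :=
        M.measure_exists_far_occ_le lam α s t
    _ ≤ ∑ x ∈ box s, ENNReal.ofReal (C * t ^ (q - α * γ)) := Finset.sum_le_sum fun x _ =>
        M.tsum_measure_far_occ_le hlam hγ (hγm.trans_le (min_le_left _ _))
          (hγm.trans_le (min_le_right _ _)) (by linarith) hqγ (by linarith) x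
    _ ≤ ENNReal.ofReal (s ^ d) * ENNReal.ofReal (C * t ^ (q - α * γ)) := by
        rw [Finset.sum_const, nsmul_eq_mul, ← ENNReal.ofReal_natCast]
        gcongr
        exact card_box_le hs
    _ ≤ _ := by
        rw [← ENNReal.ofReal_mul (by positivity), hexp]
        refine ENNReal.ofReal_le_ofReal ?_
        have : 0 ≤ s ^ d * t ^ ((d : ℝ) - α * m + δ) := by positivity
        nlinarith

/-- Lemma "good children 0": assume `min {α, βα} > d`. For every
`δ ∈ (0, α(β∧1) - d)` there exist `t₀ ≥ 1` and `c₁ > 0` such that for all `t ≥ t₀` and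
all `s ≥ 1`,
`P[there is an occupied edge in [0,s-1]^d of size larger than t] ≤ c₁ s^d t^{d-α(β∧1)+δ}`. -/
theorem statement_18 (d : ℕ) (β α : ℝ) (hd : 1 ≤ d) (hβ : 0 < β)
    (hα : (d : ℝ) < min α (β * α)) (M : Model d β) (lam : ℝ) (hlam : 0 < lam) :
    ∀ δ : ℝ, 0 < δ → δ < α * min β 1 - d →
      ∃ t₀ : ℝ, 1 ≤ t₀ ∧ ∃ c₁ : ℝ, 0 < c₁ ∧ ∀ t : ℝ, t₀ ≤ t → ∀ s : ℝ, 1 ≤ s →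
        M.μ {ω | ∃ x y : V d,
            (∀ i, (0 : ℝ) ≤ (x i : ℝ) ∧ (x i : ℝ) ≤ s - 1) ∧
            (∀ i, (0 : ℝ) ≤ (y i : ℝ) ∧ (y i : ℝ) ≤ s - 1) ∧
            t < edist x y ∧ occ M lam α x y ω} ≤
          ENNReal.ofReal (c₁ * s ^ (d : ℕ) * t ^ ((d : ℝ) - α * min β 1 + δ)) :=
  statement_18_general d β α hα M lam hlam

end InhomLRP
end
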